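/- arXiv:1712.03524 — 2 statements merged into one kernel-verified Lean document; each statement's English description precedes it below -/
import Mathlib

section
/- Let G=(A,B,E) be a finite bipartite graph and T ⊆ A a set that is α-separable, i.e., there exist S ⊆ B with |S| ≥ α|B| and disjoint T₀', T₁' ⊆ T with |T₀'|,|T₁'| ≥ α|T| such that |d(S,T₀') - d(S,T₁')| ≥ α, where d(S,U) = e(S,U)/(|S||U|) and e(S,U) is the number of edges between S and U. Then there exist S ⊆ B with |S| ≥ α|B|, subsets T₀, T₁ ⊆ T with |T₀|,|T₁| ≥ (α²/2)|T|, and reals d₀, d₁ with d₁ - d₀ ≥ (α/4)|S|, such that every h ∈ T₀ satisfies e(h,S) ≤ d₀ and every h ∈ T₁ satisfies e(h,S) ≥ d₁. -/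
/-!
Say `d(S,T₁') - d(S,T₀') ≥ α` and put `ε = α/2`. Markov's inequality, applied to the degrees
`e(h,S)` on `T₀'` and to the co-degrees `|S| - e(h,S)` on `T₁'`, shows that an `ε`-fraction of
`T₀'` has degree at most `d(S,T₀')|S|/(1-ε)` and an `ε`-fraction of `T₁'` has degree at least
`|S| - (1-d(S,T₁'))|S|/(1-ε)`. These thresholds differ by `(d(S,T₁') - d(S,T₀') - ε)|S|/(1-ε)`,
which is at least `α|S|/2`.
-/

open Finset

variable {A B : Type*} [Fintype A] [Fintype B] [DecidableEq A] [DecidableEq B]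

/-- `eDeg E h S` is the number of edges between vertex `h ∈ A` and the set `S ⊆ B`
in the bipartite graph with edge relation `E`. -/
def eDeg (E : A → B → Prop) [∀ a, DecidablePred (E a)] (h : A) (S : Finset B) : ℕ :=
  (S.filter (E h)).card

/-- `density E S U = e(S,U)/(|S||U|)`, the edge density between `S ⊆ B` and `U ⊆ A`. -/
noncomputable def density (E : A → B → Prop) [∀ a, DecidablePred (E a)]
    (S : Finset B) (U : Finset A) : ℝ :=
  (∑ h ∈ U, (eDeg E h S : ℝ)) / ((S.card : ℝ) * (U.card : ℝ))

theorem Finset.mul_card_le_card_filter_le_of_sum_le {ι : Type*} {U : Finset ι} {f : ι → ℝ}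
    (hf : ∀ i ∈ U, 0 ≤ f i) {ε θ : ℝ} (hθ : 0 ≤ θ) (hε : ε ≤ 1)
    (hsum : ∑ i ∈ U, f i ≤ (1 - ε) * θ * #U) :
    ε * #U ≤ #{i ∈ U | f i ≤ θ} := by
  have hsplit : (#{i ∈ U | f i ≤ θ} : ℝ) + #{i ∈ U | ¬f i ≤ θ} = #U := by
    exact_mod_cast card_filter_add_card_filter_not _
  rcases (U.filter (¬f · ≤ θ)).eq_empty_or_nonempty with hK | hK
  · rw [hK, card_empty, Nat.cast_zero, add_zero] at hsplit
    rw [hsplit]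
    exact mul_le_of_le_one_left (Nat.cast_nonneg _) hε
  · have hmarkov : θ * #{i ∈ U | ¬f i ≤ θ} < (1 - ε) * θ * #U :=
      calc θ * #{i ∈ U | ¬f i ≤ θ} = ∑ i ∈ U with ¬f i ≤ θ, θ := by
            rw [sum_const, nsmul_eq_mul, mul_comm]
        _ < ∑ i ∈ U with ¬f i ≤ θ, f i :=
            sum_lt_sum_of_nonempty hK fun i hi => not_le.mp (mem_filter.mp hi).2
        _ ≤ ∑ i ∈ U, f i :=
            sum_le_sum_of_subset_of_nonneg (filter_subset _ _) fun i hi _ => hf i hi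
        _ ≤ (1 - ε) * θ * #U := hsum
    have hK_card : (#{i ∈ U | ¬f i ≤ θ} : ℝ) < (1 - ε) * #U :=
      lt_of_mul_lt_mul_left (hmarkov.trans_eq (by ring)) hθ
    linarith

section Degrees

-- Fresh `A B`, so that the file-wide `Fintype` and `DecidableEq` instances are not picked up.
variable {A B : Type*} (E : A → B → Prop) [∀ a, DecidablePred (E a)]

theorem eDeg_le_card (h : A) (S : Finset B) : eDeg E h S ≤ #S :=
  card_filter_le _ _

theorem sum_eDeg_eq_density_mul (S : Finset B) (U : Finset A) :
    ∑ h ∈ U, (eDeg E h S : ℝ) = density E S U * (#S * #U) := by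
  rcases S.eq_empty_or_nonempty with rfl | hS
  · simp [eDeg]
  rcases U.eq_empty_or_nonempty with rfl | hU
  · simp
  rw [density, div_mul_cancel₀]
  positivity

theorem density_nonneg (S : Finset B) (U : Finset A) : 0 ≤ density E S U := by
  unfold density
  positivity

theorem density_le_one (S : Finset B) (U : Finset A) : density E S U ≤ 1 := by
  refine div_le_one_of_le₀ ?_ (by positivity)
  calc ∑ h ∈ U, (eDeg E h S : ℝ) ≤ ∑ _h ∈ U, (#S : ℝ) :=
        sum_le_sum fun h _ => by exact_mod_cast eDeg_le_card E h S
    _ = #S * #U := by rw [sum_const, nsmul_eq_mul, mul_comm]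

theorem mul_card_le_card_filter_eDeg_le (S : Finset B) (U : Finset A) {ε : ℝ} (hε : ε < 1) :
    ε * #U ≤ #{h ∈ U | (eDeg E h S : ℝ) ≤ density E S U * #S / (1 - ε)} := by
  have h1ε : 0 < 1 - ε := sub_pos.mpr hε
  have hδ := density_nonneg E S U
  refine mul_card_le_card_filter_le_of_sum_le (fun h _ => Nat.cast_nonneg _) (by positivity)
    hε.le (le_of_eq ?_)
  rw [sum_eDeg_eq_density_mul]
  field_simp

theorem mul_card_le_card_filter_le_eDeg (S : Finset B) (U : Finset A) {ε : ℝ} (hε : ε < 1) :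
    ε * #U ≤ #{h ∈ U | #S - (1 - density E S U) * #S / (1 - ε) ≤ (eDeg E h S : ℝ)} := by
  have h1ε : 0 < 1 - ε := sub_pos.mpr hε
  have hδ : 0 ≤ 1 - density E S U := sub_nonneg.mpr (density_le_one E S U)
  have hcodeg := mul_card_le_card_filter_le_of_sum_le (U := U)
    (f := fun h => (#S : ℝ) - eDeg E h S) (θ := (1 - density E S U) * #S / (1 - ε))
    (fun h _ => sub_nonneg.mpr (by exact_mod_cast eDeg_le_card E h S)) (by positivity) hε.le
    (le_of_eq (by
      rw [sum_sub_distrib, sum_const, nsmul_eq_mul, sum_eDeg_eq_density_mul]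
      field_simp))
  simpa only [sub_le_comm] using hcodeg

theorem exists_degree_gap_of_density_gap (S : Finset B) (U₀ U₁ : Finset A) {α : ℝ}
    (hα0 : 0 ≤ α) (hα2 : α < 2) (hgap : α ≤ density E S U₁ - density E S U₀) :
    ∃ (T₀ T₁ : Finset A) (d₀ d₁ : ℝ), T₀ ⊆ U₀ ∧ T₁ ⊆ U₁ ∧
      α / 2 * #U₀ ≤ #T₀ ∧ α / 2 * #U₁ ≤ #T₁ ∧ α / 2 * #S ≤ d₁ - d₀ ∧
      (∀ h ∈ T₀, (eDeg E h S : ℝ) ≤ d₀) ∧ (∀ h ∈ T₁, d₁ ≤ (eDeg E h S : ℝ)) := by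
  refine ⟨_, _, _, _, filter_subset _ _, filter_subset _ _,
    mul_card_le_card_filter_eDeg_le E S U₀ (by linarith),
    mul_card_le_card_filter_le_eDeg E S U₁ (by linarith), ?_,
    fun h hh => (mem_filter.mp hh).2, fun h hh => (mem_filter.mp hh).2⟩
  have h1 : 0 < 1 - α / 2 := by linarith
  have hS : (0 : ℝ) ≤ #S := Nat.cast_nonneg _
  rw [sub_sub, ← add_div, le_sub_iff_add_le, ← le_sub_iff_add_le', div_le_iff₀ h1]
  nlinarith [mul_le_mul_of_nonneg_right hgap hS, mul_nonneg (mul_nonneg hα0 hα0) hS]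

end Degrees

/-- If `T ⊆ A` is `α`-separable (there are `S ⊆ B`, disjoint `T₀', T₁' ⊆ T` with
`|S| ≥ α|B|`, `|T₀'|,|T₁'| ≥ α|T|` and `|d(S,T₀') - d(S,T₁')| ≥ α`), then there
are `S ⊆ B` with `|S| ≥ α|B|`, `T₀, T₁ ⊆ T` with `|T₀|,|T₁| ≥ (α²/2)|T|`, and
reals `d₀, d₁` with `d₁ - d₀ ≥ (α/4)|S|`, such that each `h ∈ T₀` has
`e(h,S) ≤ d₀` and each `h ∈ T₁` has `e(h,S) ≥ d₁`. -/
theorem stmt4 (E : A → B → Prop) [∀ a, DecidablePred (E a)]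
    (α : ℝ) (hα0 : 0 < α) (hα1 : α < 1) (T : Finset A)
    (hsep : ∃ (S : Finset B) (T0' T1' : Finset A),
      T0' ⊆ T ∧ T1' ⊆ T ∧ Disjoint T0' T1' ∧
      α * (Fintype.card B : ℝ) ≤ (S.card : ℝ) ∧
      α * (T.card : ℝ) ≤ (T0'.card : ℝ) ∧
      α * (T.card : ℝ) ≤ (T1'.card : ℝ) ∧
      α ≤ |density E S T0' - density E S T1'|) :
    ∃ (S : Finset B) (T0 T1 : Finset A) (d0 d1 : ℝ),
      T0 ⊆ T ∧ T1 ⊆ T ∧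
      α * (Fintype.card B : ℝ) ≤ (S.card : ℝ) ∧
      α ^ 2 / 2 * (T.card : ℝ) ≤ (T0.card : ℝ) ∧
      α ^ 2 / 2 * (T.card : ℝ) ≤ (T1.card : ℝ) ∧
      α / 4 * (S.card : ℝ) ≤ d1 - d0 ∧
      (∀ h ∈ T0, (eDeg E h S : ℝ) ≤ d0) ∧
      (∀ h ∈ T1, d1 ≤ (eDeg E h S : ℝ)) := by
  obtain ⟨S, T0', T1', h0T, h1T, -, hS, h0, h1, habs⟩ := hsep
  wlog hgap : α ≤ density E S T1' - density E S T0' generalizing T0' T1'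
  · have hgap' := (le_abs.mp habs).resolve_right (by rwa [neg_sub])
    exact this T1' T0' h1T h0T h1 h0 (by rwa [abs_sub_comm]) hgap'
  obtain ⟨T0, T1, d0, d1, hT0, hT1, hc0, hc1, hd, hlow, hhigh⟩ :=
    exists_degree_gap_of_density_gap E S T0' T1' hα0.le (by linarith) hgap
  have hsquare {U V : Finset A} (hU : α * #T ≤ #U) (hV : α / 2 * #U ≤ #V) :
      α ^ 2 / 2 * #T ≤ #V :=
    calc α ^ 2 / 2 * #T = α / 2 * (α * #T) := by ring
      _ ≤ α / 2 * #U := by gcongr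
      _ ≤ #V := hV
  refine ⟨S, T0, T1, d0, d1, hT0.trans h0T, hT1.trans h1T, hS, hsquare h0 hc0, hsquare h1 hc1,
    ?_, hlow, hhigh⟩
  linarith [mul_nonneg hα0.le (Nat.cast_nonneg (α := ℝ) #S)]
end

section
/- In a finite bipartite graph (A,B,E), if T ⊆ A is sorted in ascending order of e(S,·) for a fixed S ⊆ B, and T₀ consists of the ⌈α|T|⌉ smallest elements and T₁ of the ⌈α|T|⌉ largest elements (with respect to e(S,·)), then for any disjoint T₀', T₁' ⊆ T with |T₀'|,|T₁'| ≥ α|T| one has |d(S,T₁') - d(S,T₀')| ≤ |d(S,T₁) - d(S,T₀)|. -/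
open Finset

variable {A B : Type*} [Fintype A] [Fintype B] [DecidableEq A] [DecidableEq B]

/-- Key averaging lemma: if every element of `T1` has `f`-value at least every
element of `T \ T1`, then any `U ⊆ T` with `|U| ≥ |T1|` has average at most that of `T1`. -/
lemma avg_le_avg_max {A : Type*} [DecidableEq A] (f : A → ℝ) (T T1 U : Finset A)
    (hT1 : T1 ⊆ T) (hU : U ⊆ T) (hne : T1.Nonempty) (hcard : T1.card ≤ U.card)
    (hdom : ∀ x ∈ T \ T1, ∀ y ∈ T1, f x ≤ f y) :
    (∑ x ∈ U, f x) / U.card ≤ (∑ x ∈ T1, f x) / T1.card := by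
  obtain ⟨y₀, hy₀T, hy₀min⟩ := T1.exists_min_image f hne
  set m := f y₀ with hm
  set P : ℝ := ∑ x ∈ U ∩ T1, f x with hP
  set Q : ℝ := ∑ x ∈ U \ T1, f x with hQ
  set R : ℝ := ∑ x ∈ T1 \ U, f x with hR
  have hsplitU : Q + P = ∑ x ∈ U, f x := by
    have := Finset.sum_sdiff (f := f) (inter_subset_left (s₁ := U) (s₂ := T1))
    rwa [Finset.sdiff_inter_self_left] at this
  have hsplitT1 : R + P = ∑ x ∈ T1, f x := by
    have := Finset.sum_sdiff (f := f) (inter_subset_right (s₁ := U) (s₂ := T1))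
    rwa [Finset.inter_comm, Finset.sdiff_inter_self_left, Finset.inter_comm] at this
  set a : ℝ := ((U ∩ T1).card : ℝ) with ha
  set b : ℝ := ((U \ T1).card : ℝ) with hb
  set c : ℝ := ((T1 \ U).card : ℝ) with hc
  have hcardU : a + b = (U.card : ℝ) := by
    rw [ha, hb, ← Nat.cast_add, Finset.card_inter_add_card_sdiff]
  have hcardT1 : a + c = (T1.card : ℝ) := by
    rw [ha, hc, Finset.inter_comm, ← Nat.cast_add, Finset.card_inter_add_card_sdiff]
  have hbc : c ≤ b := by
    have : (T1.card : ℝ) ≤ (U.card : ℝ) := Nat.cast_le.mpr hcard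
    linarith
  have hPm : a * m ≤ P := by
    rw [hP, ha]
    have := Finset.card_nsmul_le_sum (U ∩ T1) f m
      (fun x hx => hy₀min x (Finset.mem_of_mem_inter_right hx))
    simpa [nsmul_eq_mul] using this
  have hRm : c * m ≤ R := by
    rw [hR, hc]
    have := Finset.card_nsmul_le_sum (T1 \ U) f m
      (fun x hx => hy₀min x (Finset.mem_sdiff.mp hx).1)
    simpa [nsmul_eq_mul] using this
  have hQm : Q ≤ b * m := by
    rw [hQ, hb]
    have := Finset.sum_le_card_nsmul (U \ T1) f m (fun x hx => by
      have hx' : x ∈ T \ T1 := Finset.mem_sdiff.mpr ⟨hU (Finset.mem_sdiff.mp hx).1,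
        (Finset.mem_sdiff.mp hx).2⟩
      exact hdom x hx' y₀ hy₀T)
    simpa [nsmul_eq_mul] using this
  have hUpos : (0 : ℝ) < (U.card : ℝ) := by
    have : 0 < U.card := lt_of_lt_of_le (Finset.card_pos.mpr hne) hcard
    exact_mod_cast this
  have hT1pos : (0 : ℝ) < (T1.card : ℝ) := by
    exact_mod_cast Finset.card_pos.mpr hne
  rw [div_le_div_iff₀ hUpos hT1pos, ← hsplitU, ← hsplitT1, ← hcardU, ← hcardT1]
  nlinarith [mul_nonneg (sub_nonneg.mpr hPm) (sub_nonneg.mpr hbc),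
    mul_nonneg (sub_nonneg.mpr hRm) (by positivity : (0:ℝ) ≤ a + b),
    mul_nonneg (sub_nonneg.mpr hQm) (by positivity : (0:ℝ) ≤ a + c)]

/-- Dual version: if every element of `T0` has `f`-value at most every element of
`T \ T0`, then any `U ⊆ T` with `|U| ≥ |T0|` has average at least that of `T0`. -/
lemma avg_min_le_avg {A : Type*} [DecidableEq A] (f : A → ℝ) (T T0 U : Finset A)
    (hT0 : T0 ⊆ T) (hU : U ⊆ T) (hne : T0.Nonempty) (hcard : T0.card ≤ U.card)
    (hdom : ∀ x ∈ T0, ∀ y ∈ T \ T0, f x ≤ f y) :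
    (∑ x ∈ T0, f x) / T0.card ≤ (∑ x ∈ U, f x) / U.card := by
  have := avg_le_avg_max (fun x => -f x) T T0 U hT0 hU hne hcard
    (fun x hx y hy => neg_le_neg (hdom y hy x hx))
  simp only [Finset.sum_neg_distrib, neg_div] at this
  linarith

lemma density_eq (E : A → B → Prop) [∀ a, DecidablePred (E a)]
    (S : Finset B) (U : Finset A) :
    density E S U = ((∑ h ∈ U, (eDeg E h S : ℝ)) / (U.card : ℝ)) / (S.card : ℝ) := by
  rw [density, div_div]
  ring_nf

/-- If `T₀` consists of `⌈α|T|⌉` elements of `T` of smallest `e(S,·)` and `T₁` of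
`⌈α|T|⌉` elements of largest `e(S,·)` (and they are disjoint), then for any disjoint
`T₀', T₁' ⊆ T` with `|T₀'|,|T₁'| ≥ α|T|` one has
`|d(S,T₁') - d(S,T₀')| ≤ |d(S,T₁) - d(S,T₀)|`. -/
theorem stmt5 (E : A → B → Prop) [∀ a, DecidablePred (E a)]
    (α : ℝ) (hα0 : 0 < α) (hα : α ≤ 1 / 2)
    (S : Finset B) (hS : S.Nonempty) (T : Finset A) (hT : T.Nonempty)
    (T0 T1 : Finset A) (hT0 : T0 ⊆ T) (hT1 : T1 ⊆ T) (hdisj : Disjoint T0 T1)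
    (hcard0 : (T0.card : ℝ) = ⌈α * (T.card : ℝ)⌉)
    (hcard1 : (T1.card : ℝ) = ⌈α * (T.card : ℝ)⌉)
    (hsmall : ∀ h ∈ T0, ∀ h' ∈ T \ T0, eDeg E h S ≤ eDeg E h' S)
    (hlarge : ∀ h ∈ T1, ∀ h' ∈ T \ T1, eDeg E h' S ≤ eDeg E h S) :
    ∀ (T0' T1' : Finset A), T0' ⊆ T → T1' ⊆ T → Disjoint T0' T1' →
      α * (T.card : ℝ) ≤ (T0'.card : ℝ) → α * (T.card : ℝ) ≤ (T1'.card : ℝ) →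
      |density E S T1' - density E S T0'| ≤ |density E S T1 - density E S T0| := by
  intro T0' T1' hT0' hT1' hdisj' hc0' hc1'
  set f : A → ℝ := fun h => (eDeg E h S : ℝ) with hf
  -- positivity facts
  have hTpos : (0 : ℝ) < (T.card : ℝ) := by exact_mod_cast Finset.card_pos.mpr hT
  have hαT : (0 : ℝ) < α * T.card := mul_pos hα0 hTpos
  have hceil : (0 : ℤ) < ⌈α * (T.card : ℝ)⌉ := Int.ceil_pos.mpr hαT
  have hT1ne : T1.Nonempty := by
    rw [← Finset.card_pos]
    have : (0 : ℝ) < (T1.card : ℝ) := by rw [hcard1]; exact_mod_cast hceil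
    exact_mod_cast this
  have hT0ne : T0.Nonempty := by
    rw [← Finset.card_pos]
    have : (0 : ℝ) < (T0.card : ℝ) := by rw [hcard0]; exact_mod_cast hceil
    exact_mod_cast this
  -- cardinality lower bounds
  have hkey : ∀ U : Finset A, α * T.card ≤ (U.card : ℝ) →
      T1.card ≤ U.card ∧ T0.card ≤ U.card := by
    intro U hU
    have h1 : (⌈α * (T.card : ℝ)⌉ : ℤ) ≤ (U.card : ℤ) := Int.ceil_le.mpr (by exact_mod_cast hU)
    constructor
    · have : (T1.card : ℝ) ≤ (U.card : ℝ) := by rw [hcard1]; exact_mod_cast h1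
      exact_mod_cast this
    · have : (T0.card : ℝ) ≤ (U.card : ℝ) := by rw [hcard0]; exact_mod_cast h1
      exact_mod_cast this
  have hdom1 : ∀ x ∈ T \ T1, ∀ y ∈ T1, f x ≤ f y := fun x hx y hy => by
    simp only [hf]; exact_mod_cast hlarge y hy x hx
  have hdom0 : ∀ x ∈ T0, ∀ y ∈ T \ T0, f x ≤ f y := fun x hx y hy => by
    simp only [hf]; exact_mod_cast hsmall x hx y hy
  -- average inequalities
  have havg : ∀ U : Finset A, U ⊆ T → α * T.card ≤ (U.card : ℝ) →
      (∑ x ∈ T0, f x) / T0.card ≤ (∑ x ∈ U, f x) / U.card ∧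
      (∑ x ∈ U, f x) / U.card ≤ (∑ x ∈ T1, f x) / T1.card := by
    intro U hUT hUc
    obtain ⟨h1, h0⟩ := hkey U hUc
    exact ⟨avg_min_le_avg f T T0 U hT0 hUT hT0ne h0 hdom0,
      avg_le_avg_max f T T1 U hT1 hUT hT1ne h1 hdom1⟩
  have hc1T1 : α * T.card ≤ (T1.card : ℝ) := by
    rw [hcard1]; exact Int.le_ceil _
  have hc0T0 : α * T.card ≤ (T0.card : ℝ) := by
    rw [hcard0]; exact Int.le_ceil _
  obtain ⟨h01, h11⟩ := havg T1' hT1' hc1'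
  obtain ⟨h00, h10⟩ := havg T0' hT0' hc0'
  obtain ⟨hA0, _⟩ := havg T1 hT1 hc1T1
  -- translate to densities
  have hSpos : (0 : ℝ) < (S.card : ℝ) := by exact_mod_cast Finset.card_pos.mpr hS
  have hmono : ∀ U V : Finset A,
      (∑ x ∈ U, f x) / U.card ≤ (∑ x ∈ V, f x) / V.card →
      density E S U ≤ density E S V := by
    intro U V h
    rw [density_eq, density_eq]
    exact div_le_div_of_nonneg_right h hSpos.le |>.trans_eq rfl
  have d1 : density E S T1' ≤ density E S T1 := hmono _ _ h11
  have d2 : density E S T0 ≤ density E S T0' := hmono _ _ h00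
  have d3 : density E S T0' ≤ density E S T1 := hmono _ _ h10
  have d4 : density E S T0 ≤ density E S T1' := hmono _ _ h01
  have d5 : density E S T0 ≤ density E S T1 := hmono _ _ hA0
  rw [abs_of_nonneg (show (0:ℝ) ≤ density E S T1 - density E S T0 by linarith), abs_le]
  constructor <;> linarith
end
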